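/- Under the decentralized-memory setup, let additionally r > 0, define p(x) = (a/3)∑_{j=1}^{d−1} |⟨e_{j+1} − e_j, x⟩| − (a/3)⟨e_1, x⟩ + (r/2)‖x‖² and x* = (a/(3rd))·1_d. Then for every i ∈ {1,…,n}, every τ with 0 ≤ τ < τ_com·n(d−1)/6, and every x ∈ mem_i(τ), one has p(x) − p(x*) ≥ a²/(18rd). -/

import Mathlib

open scoped BigOperators RealInnerProductSpace Classical

noncomputable section

/-- The `k`-th standard basis vector of `ℝ^d`, `0`-indexed (so the paper's `e_k` is
`stdBasis d (k-1)`); out-of-range indices give `0`. -/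
def stdBasis (d j : ℕ) : EuclideanSpace ℝ (Fin d) :=
  if h : j < d then EuclideanSpace.single ⟨j, h⟩ 1 else 0

/-- The subgradient oracle `∇̂h_j` (paper's `1`-indexed `j`, so `e_{j+1} = stdBasis d j`
and `e_j = stdBasis d (j-1)`). -/
def gradh (d j : ℕ) (x : EuclideanSpace ℝ (Fin d)) : EuclideanSpace ℝ (Fin d) :=
  if ⟪stdBasis d (j - 1), x⟫ < ⟪stdBasis d j, x⟫ then stdBasis d j - stdBasis d (j - 1)
  else if ⟪stdBasis d j, x⟫ < ⟪stdBasis d (j - 1), x⟫ then stdBasis d (j - 1) - stdBasis d j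
  else 0

/-- `K_j = span{e_1, …, e_j}`. -/
def Ksub (d j : ℕ) : Submodule ℝ (EuclideanSpace ℝ (Fin d)) :=
  Submodule.span ℝ {v | ∃ i < j, v = stdBasis d i}

/-- The subgradient oracle `∇̂f_i` (nodes `i` are `1`-indexed, `i ∈ {1,…,n}`). -/
def oracle (d n : ℕ) (a : ℝ) (i : ℕ) (x : EuclideanSpace ℝ (Fin d)) :
    EuclideanSpace ℝ (Fin d) :=
  if i ≤ n / 3 then
    a • (∑ j ∈ Finset.Icc 1 ((d - 1) / 2), gradh d (2 * j - 1) x) - a • stdBasis d 0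
  else if i ≤ 2 * n / 3 then
    a • ∑ j ∈ Finset.Icc 1 ((d - 1) / 2), gradh d (2 * j) x
  else 0

/-- The time-varying center node `i_c(τ) = 2n/3 + 1 + (⌊τ/τ_com⌋ mod (n/3))`. -/
def center (n : ℕ) (τcom τ : ℝ) : ℕ := 2 * n / 3 + 1 + (⌊τ / τcom⌋₊ % (n / 3))

/-- The set of `j` such that `(j, i) ∈ E(τ)` for the star graph with center `i_c(τ)`. -/
def inEdges (n : ℕ) (τcom τ : ℝ) (i : ℕ) : Set ℕ :=
  {j | 1 ≤ j ∧ j ≤ n ∧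
    ((j = center n τcom τ ∧ i ≠ center n τcom τ) ∨
     (i = center n τcom τ ∧ j ≠ center n τcom τ))}

/-- `memloc_i(τ)`: memory obtainable by a local subgradient computation. -/
def memloc (d : ℕ) (τsub : ℝ)
    (gfun : ℕ → EuclideanSpace ℝ (Fin d) → EuclideanSpace ℝ (Fin d))
    (mem : ℕ → ℝ → Set (EuclideanSpace ℝ (Fin d))) (i : ℕ) (τ : ℝ) :
    Set (EuclideanSpace ℝ (Fin d)) :=
  if τsub ≤ τ then
    ↑(Submodule.span ℝ (mem i (τ - τsub) ∪ (gfun i '' mem i (τ - τsub))))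
  else ∅

/-- `memcom_i(τ)`: memory obtainable by decentralized communication. -/
def memcom (d n : ℕ) (τcom : ℝ)
    (mem : ℕ → ℝ → Set (EuclideanSpace ℝ (Fin d))) (i : ℕ) (τ : ℝ) :
    Set (EuclideanSpace ℝ (Fin d)) :=
  if τcom ≤ τ then
    ↑(Submodule.span ℝ (⋃ j ∈ inEdges n τcom τ i, mem j (τ - τcom)))
  else ∅

/-!
Let `m = n / 3`. The subgradient `∇̂h_j` couples coordinates `j` and `j + 1` only, so a node of `V₁`
(odd `j`) or `V₂` (even `j`) whose memory lies in `K_ℓ` can reach `K_(ℓ+1)` only when `ℓ` has the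
right parity: each new coordinate requires information to travel between `V₁` and `V₂`. That
travel goes through the centre of the star graph; during window `w` it collects every memory,
but the other nodes only receive what it held in window `w - 1`, i.e. what it collected when it
was centre last, `m` windows earlier. Hence the number of reachable coordinates grows by at most
one every `m + 1` windows (`levelCap`), and before time `τ_com n (d - 1) / 6` every memory vector
has last coordinate `0`. For such `x` telescoping gives `∑ |x_(j+1) - x_j| ≥ |x_1|`, so
`p x ≥ 0`, while `p x* = -a² / (18 r d)`.
-/

section Coordinates

variable {d : ℕ}

lemma Ksub_mono {j k : ℕ} (h : j ≤ k) : Ksub d j ≤ Ksub d k :=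
  Submodule.span_mono fun _ ⟨i, hi, hv⟩ => ⟨i, hi.trans_le h, hv⟩

lemma stdBasis_mem_Ksub {i j : ℕ} (h : i < j) : stdBasis d i ∈ Ksub d j :=
  Submodule.subset_span ⟨i, h, rfl⟩

lemma stdBasis_apply (j : ℕ) (k : Fin d) : stdBasis d j k = if (k : ℕ) = j then 1 else 0 := by
  unfold stdBasis
  split_ifs with hj hk hk
  · simp [Fin.ext_iff, hk]
  · simp [Fin.ext_iff, Ne.symm hk]
  · omega
  · rfl

lemma mem_Ksub_iff {j : ℕ} {x : EuclideanSpace ℝ (Fin d)} :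
    x ∈ Ksub d j ↔ ∀ k : Fin d, j ≤ k → x k = 0 := by
  constructor
  · intro hx
    induction hx using Submodule.span_induction with
    | mem v hv =>
      obtain ⟨i, hi, rfl⟩ := hv
      intro k hk
      rw [stdBasis_apply, if_neg (by omega)]
    | zero => intro k _; rfl
    | add u v _ _ hu hv => intro k hk; simp [hu k hk, hv k hk]
    | smul c v _ hv => intro k hk; simp [hv k hk]
  · intro hx
    rw [← (EuclideanSpace.basisFun (Fin d) ℝ).sum_repr x]
    refine Submodule.sum_mem _ fun k _ => ?_
    rw [EuclideanSpace.basisFun_repr]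
    rcases lt_or_ge (k : ℕ) j with hk | hk
    · refine Submodule.smul_mem _ _ ?_
      convert stdBasis_mem_Ksub (d := d) hk
      ext i
      simp [stdBasis_apply, Fin.ext_iff]
    · rw [hx k hk, zero_smul]
      exact zero_mem _

lemma inner_stdBasis (j : ℕ) (x : EuclideanSpace ℝ (Fin d)) :
    ⟪stdBasis d j, x⟫ = if h : j < d then x ⟨j, h⟩ else 0 := by
  unfold stdBasis
  split_ifs with h
  · simp [EuclideanSpace.inner_single_left]
  · exact inner_zero_left x

lemma inner_stdBasis_eq_zero_of_mem_Ksub {j ℓ : ℕ} {x : EuclideanSpace ℝ (Fin d)}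
    (hx : x ∈ Ksub d ℓ) (h : ℓ ≤ j) : ⟪stdBasis d j, x⟫ = 0 := by
  rw [inner_stdBasis]
  split_ifs with hd
  · exact mem_Ksub_iff.1 hx ⟨j, hd⟩ h
  · rfl

end Coordinates

section Oracles

variable {d : ℕ}

lemma gradh_mem_Ksub (j : ℕ) (x : EuclideanSpace ℝ (Fin d)) : gradh d j x ∈ Ksub d (j + 1) := by
  have hj : stdBasis d j ∈ Ksub d (j + 1) := stdBasis_mem_Ksub (by omega)
  have hj' : stdBasis d (j - 1) ∈ Ksub d (j + 1) := stdBasis_mem_Ksub (by omega)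
  unfold gradh
  split_ifs
  · exact sub_mem hj hj'
  · exact sub_mem hj' hj
  · exact zero_mem _

lemma gradh_eq_zero_of_mem_Ksub {j ℓ : ℕ} {x : EuclideanSpace ℝ (Fin d)}
    (hx : x ∈ Ksub d ℓ) (h : ℓ < j) : gradh d j x = 0 := by
  unfold gradh
  rw [inner_stdBasis_eq_zero_of_mem_Ksub hx h.le,
    inner_stdBasis_eq_zero_of_mem_Ksub hx (by omega : ℓ ≤ j - 1)]
  simp

lemma gradh_mem_Ksub_of_ne {j ℓ : ℕ} {x : EuclideanSpace ℝ (Fin d)}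
    (hx : x ∈ Ksub d ℓ) (h : j ≠ ℓ) : gradh d j x ∈ Ksub d ℓ := by
  rcases lt_or_gt_of_ne h with hj | hj
  · exact Ksub_mono hj (gradh_mem_Ksub j x)
  · rw [gradh_eq_zero_of_mem_Ksub hx hj]
    exact zero_mem _

lemma oracle_mem_Ksub_of_le_third {n i ℓ : ℕ} {a : ℝ} {x : EuclideanSpace ℝ (Fin d)}
    (hi : i ≤ n / 3) (hℓ : ℓ % 2 = 0) (hℓ2 : 2 ≤ ℓ) (hx : x ∈ Ksub d ℓ) :
    oracle d n a i x ∈ Ksub d ℓ := by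
  rw [oracle, if_pos hi]
  refine sub_mem (Submodule.smul_mem _ _ (Submodule.sum_mem _ fun t ht => ?_))
    (Submodule.smul_mem _ _ (stdBasis_mem_Ksub (by omega)))
  exact gradh_mem_Ksub_of_ne hx (by simp only [Finset.mem_Icc] at ht; omega)

lemma oracle_mem_Ksub_of_le_two_thirds {n i ℓ : ℕ} {a : ℝ} {x : EuclideanSpace ℝ (Fin d)}
    (hi1 : n / 3 < i) (hi2 : i ≤ 2 * n / 3) (hℓ : ℓ = 0 ∨ ℓ % 2 = 1) (hx : x ∈ Ksub d ℓ) :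
    oracle d n a i x ∈ Ksub d ℓ := by
  rw [oracle, if_neg (by omega), if_pos hi2]
  refine Submodule.smul_mem _ _ (Submodule.sum_mem _ fun t ht => ?_)
  exact gradh_mem_Ksub_of_ne hx (by simp only [Finset.mem_Icc] at ht; omega)

lemma oracle_eq_zero_of_two_thirds_lt {n i : ℕ} {a : ℝ} (hi : 2 * n / 3 < i)
    (x : EuclideanSpace ℝ (Fin d)) : oracle d n a i x = 0 := by
  rw [oracle, if_neg (by omega), if_neg (by omega)]

end Oracles

section LevelSchedule

variable (m : ℕ)

/-- Bounds what the centre broadcasts in window `w`, hence every memory that is not a centre's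
own gathering. -/
def publicLevel (w : ℕ) : ℕ := if w ≤ m then 0 else w / (m + 1) + 1

def evenClosure (ℓ : ℕ) : ℕ := if ℓ % 2 = 0 then max 2 ℓ else ℓ + 1

def oddClosure (ℓ : ℕ) : ℕ := if ℓ % 2 = 1 ∨ ℓ = 0 then ℓ else ℓ + 1

/-- The `V₃` node `2m + 1 + j` is the centre of the windows `t ≡ j [MOD m]`, where it collects what
the other nodes held in window `t - 1`. -/
def gatheredLevel (j w : ℕ) : ℕ :=
  ((Finset.Icc 1 w).filter (· % m = j)).sup fun t => max 2 (publicLevel m (t - 1) + 1)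

/-- For `n = 3m`, the memory of node `i` during window `w = ⌊τ / τ_com⌋` lies in
`K_(levelCap m i w)`; the closures make the cap of a `V₁` or `V₂` node stable under its oracle. -/
def levelCap (i w : ℕ) : ℕ :=
  if i ≤ m then evenClosure (publicLevel m w)
  else if i ≤ 2 * m then oddClosure (publicLevel m w)
  else max (publicLevel m w) (gatheredLevel m (i - (2 * m + 1)) w)

lemma publicLevel_mono : Monotone (publicLevel m) := by
  intro u v huv
  unfold publicLevel
  split_ifs
  · exact le_rfl
  · exact Nat.zero_le _
  · omega
  · exact Nat.add_le_add_right (Nat.div_le_div_right huv) 1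

lemma publicLevel_step (hm : 1 ≤ m) {w : ℕ} (hw : m + 1 ≤ w) :
    max 2 (publicLevel m (w - m - 1) + 1) ≤ publicLevel m w := by
  have hdiv : w / (m + 1) = (w - (m + 1)) / (m + 1) + 1 := Nat.div_eq_sub_div (by omega) hw
  unfold publicLevel
  rw [Nat.sub_sub, hdiv]
  generalize (w - (m + 1)) / (m + 1) = q
  split_ifs <;> omega

lemma gatheredLevel_mono (j : ℕ) : Monotone (gatheredLevel m j) := fun _ _ h =>
  Finset.sup_mono (Finset.filter_subset_filter _ (Finset.Icc_subset_Icc le_rfl h))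

lemma gatheredLevel_le (j w : ℕ) : gatheredLevel m j w ≤ max 2 (publicLevel m (w - 1) + 1) :=
  Finset.sup_le fun t ht => by
    have ht : t ≤ w := (Finset.mem_Icc.1 (Finset.mem_filter.1 ht).1).2
    have := publicLevel_mono m (Nat.sub_le_sub_right ht 1)
    omega

lemma le_gatheredLevel {w : ℕ} (hw : 1 ≤ w) :
    max 2 (publicLevel m (w - 1) + 1) ≤ gatheredLevel m (w % m) w :=
  Finset.le_sup (f := fun t => max 2 (publicLevel m (t - 1) + 1))
    (Finset.mem_filter.2 ⟨Finset.mem_Icc.2 ⟨hw, le_rfl⟩, rfl⟩)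

/-- The centre of window `w` last gathered at least `m` windows earlier. -/
lemma gatheredLevel_pred_le (hm : 1 ≤ m) {w : ℕ} :
    gatheredLevel m (w % m) (w - 1) ≤ publicLevel m w :=
  Finset.sup_le fun t ht => by
    obtain ⟨ht, hmod⟩ := Finset.mem_filter.1 ht
    obtain ⟨ht1, htw⟩ := Finset.mem_Icc.1 ht
    have hgap : m ≤ w - t :=
      Nat.le_of_dvd (by omega) ((Nat.modEq_iff_dvd' (by omega)).1 hmod)
    refine le_trans ?_ (publicLevel_step m hm (by omega))
    have := publicLevel_mono m (by omega : t - 1 ≤ w - m - 1)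
    omega

lemma levelCap_mono (i : ℕ) : Monotone (levelCap m i) := by
  intro u v huv
  have hP := publicLevel_mono m huv
  have hG := gatheredLevel_mono m (i - (2 * m + 1)) huv
  unfold levelCap evenClosure oddClosure
  split_ifs <;> omega

lemma publicLevel_le_levelCap (i w : ℕ) : publicLevel m w ≤ levelCap m i w := by
  unfold levelCap evenClosure oddClosure
  split_ifs <;> omega

lemma levelCap_le (i w : ℕ) : levelCap m i w ≤ max 2 (publicLevel m w + 1) := by
  have hG := gatheredLevel_le m (i - (2 * m + 1)) w
  have hP := publicLevel_mono m (Nat.sub_le w 1)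
  unfold levelCap evenClosure oddClosure
  split_ifs <;> omega

lemma levelCap_center (k w : ℕ) :
    levelCap m (2 * m + 1 + k) w = max (publicLevel m w) (gatheredLevel m k w) := by
  rw [levelCap, if_neg (by omega), if_neg (by omega), Nat.add_sub_cancel_left]

lemma levelCap_pred_le_of_center (hm : 1 ≤ m) {i j w : ℕ} (hw : 1 ≤ w)
    (h : j = 2 * m + 1 + w % m ∨ i = 2 * m + 1 + w % m) :
    levelCap m j (w - 1) ≤ levelCap m i w := by
  rcases h with rfl | rfl
  · rw [levelCap_center]
    refine le_trans ?_ (publicLevel_le_levelCap m i w)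
    exact max_le (publicLevel_mono m (Nat.sub_le w 1)) (gatheredLevel_pred_le m hm)
  · rw [levelCap_center]
    exact (levelCap_le m j (w - 1)).trans (le_max_of_le_right (le_gatheredLevel m hw))

lemma levelCap_le_sub_one (hm : 1 ≤ m) {d i w : ℕ} (hd : 3 ≤ d) (hw : 2 * w < m * (d - 1)) :
    levelCap m i w ≤ d - 1 := by
  refine (levelCap_le m i w).trans ?_
  obtain ⟨e, rfl⟩ : ∃ e, d = e + 3 := ⟨d - 3, by omega⟩
  have hw' : w < (e + 1) * (m + 1) := by
    rw [show e + 3 - 1 = e + 2 by omega] at hw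
    nlinarith
  have hq : w / (m + 1) < e + 1 := (Nat.div_lt_iff_lt_mul (by omega)).2 hw'
  unfold publicLevel
  split_ifs <;> omega

lemma oracle_mem_Ksub_levelCap {d i w : ℕ} {a : ℝ} {x : EuclideanSpace ℝ (Fin d)}
    (hx : x ∈ Ksub d (levelCap m i w)) : oracle d (3 * m) a i x ∈ Ksub d (levelCap m i w) := by
  have h1 : 3 * m / 3 = m := by omega
  have h2 : 2 * (3 * m) / 3 = 2 * m := by omega
  unfold levelCap evenClosure oddClosure at hx ⊢
  split_ifs at hx ⊢ with hi1 hℓ hi2 hℓ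
  · exact oracle_mem_Ksub_of_le_third (by omega) (by omega) (by omega) hx
  · exact oracle_mem_Ksub_of_le_third (by omega) (by omega) (by omega) hx
  · exact oracle_mem_Ksub_of_le_two_thirds (by omega) (by omega) (by omega) hx
  · exact oracle_mem_Ksub_of_le_two_thirds (by omega) (by omega) (by omega) hx
  · rw [oracle_eq_zero_of_two_thirds_lt (by omega)]
    exact zero_mem _

end LevelSchedule

lemma nonneg_induction_of_step {P : ℝ → Prop} {ε : ℝ} (hε : 0 < ε)
    (h : ∀ τ, 0 ≤ τ → (∀ σ, 0 ≤ σ → σ ≤ τ - ε → P σ) → P τ) : ∀ τ, 0 ≤ τ → P τ := by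
  have key : ∀ k : ℕ, ∀ τ, 0 ≤ τ → τ < k * ε → P τ := by
    intro k
    induction k with
    | zero => intro τ hτ hk; rw [Nat.cast_zero, zero_mul] at hk; linarith
    | succ k ih =>
      intro τ hτ hk
      refine h τ hτ fun σ hσ hστ => ih σ hσ ?_
      push_cast at hk
      linarith
  intro τ hτ
  refine key (⌊τ / ε⌋₊ + 1) τ hτ ?_
  rw [← div_lt_iff₀ hε]
  exact_mod_cast Nat.lt_floor_add_one (τ / ε)

section Memory

variable {d n : ℕ} {τcom τsub : ℝ} {mem : ℕ → ℝ → Set (EuclideanSpace ℝ (Fin d))}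

lemma memloc_subset {gfun : ℕ → EuclideanSpace ℝ (Fin d) → EuclideanSpace ℝ (Fin d)}
    {S : Submodule ℝ (EuclideanSpace ℝ (Fin d))} {i : ℕ} {τ : ℝ}
    (hS : ∀ x ∈ S, gfun i x ∈ S) (h : τsub ≤ τ → mem i (τ - τsub) ⊆ S) :
    memloc d τsub gfun mem i τ ⊆ S := by
  unfold memloc
  split_ifs with hτ
  · refine Submodule.span_le.2 (Set.union_subset (h hτ) ?_)
    rintro _ ⟨x, hx, rfl⟩
    exact hS x (h hτ hx)
  · exact Set.empty_subset _

lemma memcom_subset {S : Submodule ℝ (EuclideanSpace ℝ (Fin d))} {i : ℕ} {τ : ℝ}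
    (h : τcom ≤ τ → ∀ j ∈ inEdges n τcom τ i, mem j (τ - τcom) ⊆ S) :
    memcom d n τcom mem i τ ⊆ S := by
  unfold memcom
  split_ifs with hτ
  · exact Submodule.span_le.2 (Set.iUnion₂_subset (h hτ))
  · exact Set.empty_subset _

lemma center_eq (m : ℕ) (τcom τ : ℝ) :
    center (3 * m) τcom τ = 2 * m + 1 + ⌊τ / τcom⌋₊ % m := by
  rw [center, show 2 * (3 * m) / 3 = 2 * m by omega, show 3 * m / 3 = m by omega]

theorem mem_subset_Ksub_levelCap {m : ℕ} {a : ℝ} (hm : 1 ≤ m) (hcom : 0 < τcom)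
    (hsub : 0 < τsub)
    (hmem : ∀ i τ, 0 ≤ τ →
      mem i τ ⊆ {0} ∪ memloc d τsub (oracle d (3 * m) a) mem i τ ∪ memcom d (3 * m) τcom mem i τ) :
    ∀ τ, 0 ≤ τ → ∀ i, mem i τ ⊆ Ksub d (levelCap m i ⌊τ / τcom⌋₊) := by
  refine nonneg_induction_of_step (lt_min hsub hcom) fun τ hτ ih i => (hmem i τ hτ).trans ?_
  refine Set.union_subset (Set.union_subset ?_ ?_) ?_
  · exact Set.singleton_subset_iff.2 (zero_mem _)
  · refine memloc_subset (fun x hx => oracle_mem_Ksub_levelCap m hx) fun hτsub => ?_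
    refine (ih _ (by linarith) (by linarith [min_le_left τsub τcom]) i).trans (Ksub_mono ?_)
    exact levelCap_mono m i (Nat.floor_mono (by gcongr; linarith))
  · refine memcom_subset fun hτcom j hj => ?_
    refine (ih _ (by linarith) (by linarith [min_le_right τsub τcom]) j).trans (Ksub_mono ?_)
    have hw : 1 ≤ ⌊τ / τcom⌋₊ := Nat.one_le_floor_iff _ |>.2 ((one_le_div hcom).2 hτcom)
    have hprev : ⌊(τ - τcom) / τcom⌋₊ = ⌊τ / τcom⌋₊ - 1 := by
      rw [sub_div, div_self hcom.ne', Nat.floor_sub_one]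
    rw [hprev]
    obtain ⟨-, -, hedge⟩ := hj
    rw [center_eq] at hedge
    exact levelCap_pred_le_of_center m hm hw (by tauto)

end Memory

def hardObjective (d : ℕ) (a r : ℝ) (x : EuclideanSpace ℝ (Fin d)) : ℝ :=
  (a / 3) * ∑ j ∈ Finset.Icc 1 (d - 1), |⟪stdBasis d j - stdBasis d (j - 1), x⟫|
    - (a / 3) * ⟪stdBasis d 0, x⟫ + (r / 2) * ‖x‖ ^ 2

lemma Finset.sum_Icc_one_sub_pred {G : Type*} [AddCommGroup G] (g : ℕ → G) (N : ℕ) :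
    ∑ j ∈ Finset.Icc 1 N, (g j - g (j - 1)) = g N - g 0 := by
  induction N with
  | zero => simp
  | succ N ih =>
    rw [Finset.sum_Icc_succ_top (by omega), ih, Nat.add_sub_cancel]
    abel

/-- The telescoping bound `|x_d - x_1| ≤ ∑ |x_{j+1} - x_j|` with `x_d = 0` absorbs the linear term. -/
lemma hardObjective_nonneg {d : ℕ} {a r : ℝ} (ha : 0 ≤ a) (hr : 0 ≤ r)
    {x : EuclideanSpace ℝ (Fin d)} (hx : ⟪stdBasis d (d - 1), x⟫ = 0) :
    0 ≤ hardObjective d a r x := by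
  set g : ℕ → ℝ := fun j => ⟪stdBasis d j, x⟫
  have hfirst : g 0 ≤ ∑ j ∈ Finset.Icc 1 (d - 1), |⟪stdBasis d j - stdBasis d (j - 1), x⟫| :=
    calc g 0 ≤ |g (d - 1) - g 0| := by simp [g, hx, le_abs_self]
      _ = |∑ j ∈ Finset.Icc 1 (d - 1), (g j - g (j - 1))| := by
        rw [Finset.sum_Icc_one_sub_pred]
      _ ≤ _ := by simpa only [g, inner_sub_left] using Finset.abs_sum_le_sum_abs _ _
  have : 0 ≤ (r / 2) * ‖x‖ ^ 2 := by positivity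
  unfold hardObjective
  nlinarith

lemma hardObjective_const {d : ℕ} (hd : 0 < d) (a r c : ℝ) :
    hardObjective d a r ((WithLp.equiv 2 (Fin d → ℝ)).symm fun _ => c) =
      r / 2 * d * c ^ 2 - a / 3 * c := by
  have hinner : ∀ j < d, ⟪stdBasis d j, (WithLp.equiv 2 (Fin d → ℝ)).symm fun _ => c⟫ = c :=
    fun j hj => by rw [inner_stdBasis, dif_pos hj]; rfl
  have hsum : ∀ j ∈ Finset.Icc 1 (d - 1),
      |⟪stdBasis d j - stdBasis d (j - 1), (WithLp.equiv 2 (Fin d → ℝ)).symm fun _ => c⟫| = 0 :=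
    fun j hj => by
      rw [Finset.mem_Icc] at hj
      rw [inner_sub_left, hinner j (by omega), hinner (j - 1) (by omega), sub_self, abs_zero]
  have hnorm : ‖(WithLp.equiv 2 (Fin d → ℝ)).symm fun _ => c‖ ^ 2 = d * c ^ 2 := by
    rw [EuclideanSpace.norm_eq, Real.sq_sqrt (by positivity)]
    simp
  rw [hardObjective, Finset.sum_eq_zero hsum, hinner 0 hd, hnorm]
  ring

lemma two_mul_floor_div_lt {τ T : ℝ} {K : ℕ} (hT : 0 < T) (hτ : 0 ≤ τ) (h : τ < T * K / 2) :
    2 * ⌊τ / T⌋₊ < K := by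
  have hfloor : (⌊τ / T⌋₊ : ℝ) < K / 2 :=
    (Nat.floor_le (div_nonneg hτ hT.le)).trans_lt (by rw [div_lt_iff₀ hT]; linarith)
  exact_mod_cast (by linarith : (2 * ⌊τ / T⌋₊ : ℝ) < K)

theorem stmt10_general (d n : ℕ) (hd : 3 ≤ d) (hn : 3 ≤ n) (hn3 : 3 ∣ n)
    (a τcom τsub : ℝ) (ha : 0 < a) (hcom : 0 < τcom) (hsub : 0 < τsub)
    (mem : ℕ → ℝ → Set (EuclideanSpace ℝ (Fin d)))
    (hmem : ∀ i τ, 0 ≤ τ →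
      mem i τ ⊆ {0} ∪ memloc d τsub (oracle d n a) mem i τ ∪ memcom d n τcom mem i τ)
    (r : ℝ) (hr : 0 < r)
    (p : EuclideanSpace ℝ (Fin d) → ℝ)
    (hp : ∀ x, p x =
      (a / 3) * ∑ j ∈ Finset.Icc 1 (d - 1), |⟪stdBasis d j - stdBasis d (j - 1), x⟫|
        - (a / 3) * ⟪stdBasis d 0, x⟫ + (r / 2) * ‖x‖ ^ 2)
    (xstar : EuclideanSpace ℝ (Fin d))
    (hxstar : xstar = (WithLp.equiv 2 (Fin d → ℝ)).symm fun _ => a / (3 * r * d)) :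
    ∀ i, 1 ≤ i → i ≤ n → ∀ τ : ℝ, 0 ≤ τ → τ < τcom * (n * (d - 1) : ℕ) / 6 →
      ∀ x ∈ mem i τ, a ^ 2 / (18 * r * d) ≤ p x - p xstar := by
  intro i _ _ τ hτ hτT x hx
  obtain ⟨m, rfl⟩ := hn3
  have hwindow : 2 * ⌊τ / τcom⌋₊ < m * (d - 1) :=
    two_mul_floor_div_lt hcom hτ (by push_cast at hτT ⊢; linarith)
  have hxK : x ∈ Ksub d (d - 1) :=
    Ksub_mono (levelCap_le_sub_one m (by omega) hd hwindow)
      (mem_subset_Ksub_levelCap (by omega) hcom hsub hmem τ hτ i hx)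
  have hpx : 0 ≤ p x :=
    hp x ▸ hardObjective_nonneg ha.le hr.le (inner_stdBasis_eq_zero_of_mem_Ksub hxK le_rfl)
  have hpxstar : p xstar = -(a ^ 2 / (18 * r * d)) :=
    calc p xstar = hardObjective d a r xstar := hp xstar
      _ = _ := by
        rw [hxstar, hardObjective_const (by omega)]
        field_simp
        ring
  linarith

theorem stmt10 (d n : ℕ) (hd : 3 ≤ d) (hodd : d % 2 = 1) (hn : 3 ≤ n) (hn3 : 3 ∣ n)
    (a τcom τsub : ℝ) (ha : 0 < a) (hcom : 0 < τcom) (hsub : 0 < τsub)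
    (mem : ℕ → ℝ → Set (EuclideanSpace ℝ (Fin d)))
    (hmem0 : ∀ i, mem i 0 = {0})
    (hmem : ∀ i τ, 0 ≤ τ →
      mem i τ ⊆ {0} ∪ memloc d τsub (oracle d n a) mem i τ ∪ memcom d n τcom mem i τ)
    (r : ℝ) (hr : 0 < r)
    (p : EuclideanSpace ℝ (Fin d) → ℝ)
    (hp : ∀ x, p x =
      (a / 3) * ∑ j ∈ Finset.Icc 1 (d - 1), |⟪stdBasis d j - stdBasis d (j - 1), x⟫|
        - (a / 3) * ⟪stdBasis d 0, x⟫ + (r / 2) * ‖x‖ ^ 2)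
    (xstar : EuclideanSpace ℝ (Fin d))
    (hxstar : xstar = (WithLp.equiv 2 (Fin d → ℝ)).symm fun _ => a / (3 * r * d)) :
    ∀ i, 1 ≤ i → i ≤ n → ∀ τ : ℝ, 0 ≤ τ → τ < τcom * (n * (d - 1) : ℕ) / 6 →
      ∀ x ∈ mem i τ, a ^ 2 / (18 * r * d) ≤ p x - p xstar :=
  stmt10_general d n hd hn hn3 a τcom τsub ha hcom hsub mem hmem r hr p hp xstar hxstar

end
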